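/- arXiv:2106.14339 — 9 statements merged into one kernel-verified Lean document; each statement's English description precedes it below -/
import Mathlib

section
/- For a normalized log-convex positive sequence M, the moderate growth condition (there exists C ≥ 1 with M_{p+q} ≤ C^{p+q} M_p M_q for all p,q) is equivalent to: there exists A ≥ 1 with M_{2p} ≤ A^{2p} (M_p)^2 for all p ∈ ℕ. -/
/-- For a normalized log-convex positive sequence `M`,
moderate growth is equivalent to `∃ A ≥ 1, ∀ p, M (2p) ≤ A^(2p) (M p)^2`. -/
theorem stmt3 (M : ℕ → ℝ) (hpos : ∀ p, 0 < M p)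
    (hM0 : M 0 = 1) (hM1 : 1 ≤ M 1)
    (hlc : ∀ p : ℕ, (M (p + 1)) ^ 2 ≤ M p * M (p + 2)) :
    (∃ C : ℝ, 1 ≤ C ∧ ∀ p q : ℕ, M (p + q) ≤ C ^ (p + q) * M p * M q) ↔
    (∃ A : ℝ, 1 ≤ A ∧ ∀ p : ℕ, M (2 * p) ≤ A ^ (2 * p) * (M p) ^ 2) := by
  constructor
  · rintro ⟨C, hC, h⟩
    exact ⟨C, hC, fun p => by
      have := h p p
      rw [two_mul]
      calc M (p + p) ≤ C ^ (p + p) * M p * M p := this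
        _ = C ^ (p + p) * M p ^ 2 := by ring⟩
  · rintro ⟨A, hA, h⟩
    -- ratio monotonicity: for i ≤ j, M (i+1) * M j ≤ M i * M (j+1)
    have ratio : ∀ i j : ℕ, i ≤ j → M (i + 1) * M j ≤ M i * M (j + 1) := by
      intro i j hij
      induction j, hij using Nat.le_induction with
      | base => rw [mul_comm]
      | succ j hij ih =>
        have h1 := hlc j
        -- M(i+1) * M(j+1) ≤ M i * M(j+2)
        have hMj := (hpos j)
        have hMj1 := (hpos (j + 1))
        have hMi := (hpos i)
        have hMi1 := (hpos (i + 1))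
        -- M(i+1)/M i ≤ M(j+1)/M j ≤ M(j+2)/M(j+1)
        have key : M (i + 1) * M (j + 1) ≤ M i * M (j + 2) := by
          have h2 : M (i + 1) * M j * M (j + 1) ^ 2 ≤ M i * M (j + 1) * (M j * M (j + 2)) := by
            apply mul_le_mul ih h1 (by positivity) (by positivity)
          have h3 : M (i + 1) * M (j + 1) * (M j * M (j + 1)) ≤
              M i * M (j + 2) * (M j * M (j + 1)) := by
            calc M (i + 1) * M (j + 1) * (M j * M (j + 1))
                = M (i + 1) * M j * M (j + 1) ^ 2 := by ring
              _ ≤ M i * M (j + 1) * (M j * M (j + 2)) := h2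
              _ = M i * M (j + 2) * (M j * M (j + 1)) := by ring
          exact le_of_mul_le_mul_right h3 (by positivity)
        simpa using key
    -- shift lemma: a ≤ b → M (a+k) * M b ≤ M a * M (b+k)
    have shift : ∀ k a b : ℕ, a ≤ b → M (a + k) * M b ≤ M a * M (b + k) := by
      intro k
      induction k with
      | zero => intro a b _; simp [mul_comm]
      | succ k ih =>
        intro a b hab
        have h1 := ratio (a + k) (b + k) (by omega)
        have h2 := ih a b hab
        have hMa := hpos a
        have hMak := hpos (a + k)
        have hMbk := hpos (b + k)
        have hMb := hpos b
        have h3 : M (a + k + 1) * M b * (M (a + k) * M (b + k)) ≤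
            M a * M (b + k + 1) * (M (a + k) * M (b + k)) := by
          calc M (a + k + 1) * M b * (M (a + k) * M (b + k))
              = (M (a + k + 1) * M (b + k)) * (M (a + k) * M b) := by ring
            _ ≤ (M (a + k) * M (b + k + 1)) * (M a * M (b + k)) := by
                apply mul_le_mul h1 h2 (mul_nonneg (hpos _).le (hpos _).le)
                  (mul_nonneg (hpos _).le (hpos _).le)
            _ = M a * M (b + k + 1) * (M (a + k) * M (b + k)) := by ring
        have := le_of_mul_le_mul_right h3 (mul_pos (hpos _) (hpos _))
        simpa [add_assoc] using this
    refine ⟨A ^ 2, one_le_pow₀ hA, ?_⟩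
    have main : ∀ p q : ℕ, p ≤ q → M (p + q) ≤ (A ^ 2) ^ (p + q) * M p * M q := by
      intro p q hpq
      have h1 : M (p + q) * M q ≤ M p * M (q + q) := shift q p q hpq
      have h2 : M (2 * q) ≤ A ^ (2 * q) * M q ^ 2 := h q
      have hq := hpos q
      have hp := hpos p
      have h3 : M (p + q) ≤ M p * M (q + q) / M q :=
        (le_div_iff₀ hq).mpr h1
      calc M (p + q) ≤ M p * M (q + q) / M q := h3
        _ ≤ M p * (A ^ (2 * q) * M q ^ 2) / M q := by
            gcongr
            simpa [two_mul] using h q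
        _ = A ^ (2 * q) * M p * M q := by field_simp
        _ ≤ (A ^ 2) ^ (p + q) * M p * M q := by
            apply mul_le_mul_of_nonneg_right _ hq.le
            apply mul_le_mul_of_nonneg_right _ hp.le
            rw [← pow_mul]
            exact pow_le_pow_right₀ hA (by omega)
    intro p q
    rcases le_total p q with hpq | hqp
    · exact main p q hpq
    · have := main q p hqp
      rw [add_comm q p] at this
      calc M (p + q) ≤ (A ^ 2) ^ (p + q) * M q * M p := this
        _ = (A ^ 2) ^ (p + q) * M p * M q := by ring
end

section
/- For a normalized log-convex positive sequence M with quotients μ_p = M_p/M_{p-1}, the condition sup_{p∈ℕ_{>0}} μ_{2p}/μ_p < +∞ implies that there exists A ≥ 1 with M_{2p} ≤ A^{2p}(M_p)^2 for all p. -/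
/-- For a normalized log-convex positive sequence `M` with
quotients `μ p = M p / M (p-1)`, if `sup_{p ≥ 1} μ (2p) / μ p < ∞`, then
`∃ A ≥ 1, ∀ p, M (2p) ≤ A^(2p) (M p)^2`. -/
theorem stmt4 (M : ℕ → ℝ) (hpos : ∀ p, 0 < M p)
    (hM0 : M 0 = 1) (hM1 : 1 ≤ M 1)
    (hlc : ∀ p : ℕ, (M (p + 1)) ^ 2 ≤ M p * M (p + 2))
    (μ : ℕ → ℝ) (hμ : ∀ p : ℕ, μ p = M p / M (p - 1))
    (hsup : ∃ B : ℝ, ∀ p : ℕ, 1 ≤ p → μ (2 * p) / μ p ≤ B) :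
    ∃ A : ℝ, 1 ≤ A ∧ ∀ p : ℕ, M (2 * p) ≤ A ^ (2 * p) * (M p) ^ 2 := by
  obtain ⟨B, hB⟩ := hsup
  set A := max B 1 with hA
  have hA1 : (1:ℝ) ≤ A := le_max_right _ _
  have hA0 : (0:ℝ) < A := lt_of_lt_of_le one_pos hA1
  have hμpos : ∀ q : ℕ, 0 < μ q := fun q => by
    rw [hμ]; exact div_pos (hpos q) (hpos (q - 1))
  -- μ (q+1) = M (q+1) / M q
  have hμsucc : ∀ q : ℕ, μ (q + 1) = M (q + 1) / M q := fun q => by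
    rw [hμ]; norm_num
  have hMstep : ∀ q : ℕ, M (q + 1) = M q * μ (q + 1) := fun q => by
    have h0 := (hpos q).ne'
    rw [hμsucc]; field_simp
  -- μ is monotone at successive steps
  have hmono : ∀ q : ℕ, μ (q + 1) ≤ μ (q + 2) := by
    intro q
    rw [hμsucc, hμsucc]
    rw [div_le_div_iff₀ (hpos q) (hpos (q + 1))]
    have := hlc q
    nlinarith [this]
  -- key bound: μ (2p) ≤ A * μ p for p ≥ 1
  have hkey : ∀ p : ℕ, 1 ≤ p → μ (2 * p) ≤ A * μ p := by
    intro p hp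
    have h := hB p hp
    have hμp := hμpos p
    have : μ (2 * p) / μ p ≤ A := le_trans h (le_max_left _ _)
    calc μ (2 * p) = μ (2 * p) / μ p * μ p := by field_simp
    _ ≤ A * μ p := mul_le_mul_of_nonneg_right this hμp.le
  refine ⟨A, hA1, ?_⟩
  intro p
  induction p with
  | zero => simp [hM0]
  | succ p ih =>
    have e1 : 2 * (p + 1) = (2 * p + 1) + 1 := by ring
    have e2 : M (2 * (p + 1)) = M (2 * p) * μ (2 * p + 1) * μ (2 * p + 2) := by
      rw [e1, hMstep (2 * p + 1), hMstep (2 * p)]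
    have h1 : μ (2 * p + 1) ≤ μ (2 * p + 2) := hmono (2 * p)
    have h2 : μ (2 * p + 2) ≤ A * μ (p + 1) := by
      have := hkey (p + 1) (Nat.le_add_left 1 p)
      have e : 2 * (p + 1) = 2 * p + 2 := by ring
      rwa [e] at this
    have hμ1 := hμpos (2 * p + 1)
    have hμ2 := hμpos (2 * p + 2)
    have hμ3 := hμpos (p + 1)
    have hM2p := hpos (2 * p)
    have step1 : M (2 * (p + 1)) ≤ M (2 * p) * (μ (2 * p + 2))^2 := by
      rw [e2, sq, ← mul_assoc]; gcongr
    have step2 : M (2 * p) * (μ (2 * p + 2))^2 ≤ (A ^ (2 * p) * (M p)^2) * (A * μ (p + 1))^2 := by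
      have hsq : (μ (2 * p + 2))^2 ≤ (A * μ (p + 1))^2 := by nlinarith
      have hApow : (0:ℝ) ≤ A ^ (2 * p) * (M p)^2 := by positivity
      exact mul_le_mul ih hsq (by positivity) hApow
    have e3 : (A ^ (2 * p) * (M p)^2) * (A * μ (p + 1))^2
        = A ^ (2 * (p + 1)) * (M p * μ (p + 1))^2 := by ring
    have e4 : M (p + 1) = M p * μ (p + 1) := hMstep p
    calc M (2 * (p + 1)) ≤ (A ^ (2 * p) * (M p)^2) * (A * μ (p + 1))^2 :=
          le_trans step1 step2
    _ = A ^ (2 * (p + 1)) * (M (p + 1))^2 := by rw [e3, e4]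
end

section
/- For a normalized log-convex positive sequence M, the condition ∃ A ≥ 1 ∀ p ≥ 1: μ_p ≤ A (M_p)^{1/p} implies that there exists B ≥ 1 such that M_{2p} ≤ B^{2p} (M_p)^2 for all p ∈ ℕ, i.e. moderate growth. -/
/-- For a normalized log-convex positive sequence `M`,
if `∃ A ≥ 1, ∀ p ≥ 1, μ p ≤ A (M p)^(1/p)`, then `M` has moderate growth in
the form `∃ B ≥ 1, ∀ p, M (2p) ≤ B^(2p) (M p)^2`. -/
theorem stmt5 (M : ℕ → ℝ) (hpos : ∀ p, 0 < M p)
    (hM0 : M 0 = 1) (hM1 : 1 ≤ M 1)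
    (hlc : ∀ p : ℕ, (M (p + 1)) ^ 2 ≤ M p * M (p + 2))
    (h : ∃ A : ℝ, 1 ≤ A ∧ ∀ p : ℕ, 1 ≤ p →
      M p / M (p - 1) ≤ A * (M p) ^ ((p : ℝ)⁻¹)) :
    ∃ B : ℝ, 1 ≤ B ∧ ∀ p : ℕ, M (2 * p) ≤ B ^ (2 * p) * (M p) ^ 2 := by
  obtain ⟨A, hA, hAμ⟩ := h
  have hA0 : (0 : ℝ) < A := lt_of_lt_of_le one_pos hA
  -- quotients are monotone
  have hmu : ∀ n : ℕ, M (n + 1) / M n ≤ M (n + 2) / M (n + 1) := by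
    intro n
    rw [div_le_div_iff₀ (hpos n) (hpos (n + 1))]
    nlinarith [hlc n]
  -- key estimate by induction
  have key : ∀ k n : ℕ, M (n + k + 1) ≤ M n * (M (n + k + 1) / M (n + k)) ^ (k + 1) := by
    intro k
    induction k with
    | zero =>
      intro n
      simp only [Nat.add_zero, Nat.zero_add, zero_add, pow_one]
      rw [mul_div_cancel₀ _ (ne_of_gt (hpos n))]
    | succ k ih =>
      intro n
      have h1 : M (n + (k + 1) + 1) = M (n + k + 1) * (M (n + k + 2) / M (n + k + 1)) := by
        rw [mul_div_cancel₀ _ (ne_of_gt (hpos (n + k + 1)))]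
        ring_nf
      have hq : (0:ℝ) ≤ M (n + k + 1) / M (n + k) := le_of_lt (div_pos (hpos _) (hpos _))
      have hq' : (0:ℝ) ≤ M (n + k + 2) / M (n + k + 1) := le_of_lt (div_pos (hpos _) (hpos _))
      calc M (n + (k + 1) + 1) = M (n + k + 1) * (M (n + k + 2) / M (n + k + 1)) := h1
        _ ≤ (M n * (M (n + k + 1) / M (n + k)) ^ (k + 1)) * (M (n + k + 2) / M (n + k + 1)) := by
            exact mul_le_mul_of_nonneg_right (ih n) hq'
        _ ≤ (M n * (M (n + k + 2) / M (n + k + 1)) ^ (k + 1)) * (M (n + k + 2) / M (n + k + 1)) := by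
            refine mul_le_mul_of_nonneg_right ?_ hq'
            refine mul_le_mul_of_nonneg_left ?_ (le_of_lt (hpos n))
            exact pow_le_pow_left₀ hq (hmu (n + k)) (k + 1)
        _ = M n * (M (n + k + 2) / M (n + k + 1)) ^ (k + 2) := by ring
        _ = M n * (M (n + (k + 1) + 1) / M (n + (k + 1))) ^ ((k + 1) + 1) := by ring_nf
  refine ⟨A, hA, fun p => ?_⟩
  rcases Nat.eq_zero_or_pos p with rfl | hp
  · simp [hM0]
  obtain ⟨m, rfl⟩ := Nat.exists_eq_add_of_lt hp
  simp only [Nat.zero_add]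
  set p := m + 1 with hpdef
  -- M (2p) ≤ M p * μ(2p)^p
  have h1 : M (2 * p) ≤ M p * (M (2 * p) / M (2 * p - 1)) ^ p := by
    have := key m p
    have e1 : p + m + 1 = 2 * p := by omega
    have e2 : p + m = 2 * p - 1 := by omega
    have e3 : m + 1 = p := rfl
    rw [e1, e2, e3] at this
    exact this
  -- μ(2p) ≤ A * M(2p)^(1/(2p))
  have h2 : M (2 * p) / M (2 * p - 1) ≤ A * (M (2 * p)) ^ (((2 * p : ℕ) : ℝ))⁻¹ :=
    hAμ (2 * p) (by omega)
  have hMpos := hpos (2 * p)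
  have hμnn : (0:ℝ) ≤ M (2 * p) / M (2 * p - 1) := le_of_lt (div_pos (hpos _) (hpos _))
  have h3 : (M (2 * p) / M (2 * p - 1)) ^ p ≤ A ^ p * (M (2 * p)) ^ ((1:ℝ)/2) := by
    calc (M (2 * p) / M (2 * p - 1)) ^ p
        ≤ (A * (M (2 * p)) ^ (((2 * p : ℕ) : ℝ))⁻¹) ^ p := pow_le_pow_left₀ hμnn h2 p
      _ = A ^ p * ((M (2 * p)) ^ (((2 * p : ℕ) : ℝ))⁻¹) ^ p := mul_pow _ _ _
      _ = A ^ p * (M (2 * p)) ^ ((1:ℝ)/2) := by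
          have hp0 : (p : ℝ) ≠ 0 := by positivity
          have hexp : (((2 * p : ℕ) : ℝ))⁻¹ * (p : ℝ) = 1 / 2 := by
            push_cast; field_simp
          rw [← Real.rpow_natCast ((M (2 * p)) ^ (((2 * p : ℕ) : ℝ))⁻¹) p,
            ← Real.rpow_mul (le_of_lt hMpos), hexp]
  have hroot : (0:ℝ) < (M (2 * p)) ^ ((1:ℝ)/2) := Real.rpow_pos_of_pos hMpos _
  have hsq : (M (2 * p)) ^ ((1:ℝ)/2) * (M (2 * p)) ^ ((1:ℝ)/2) = M (2 * p) := by
    rw [← Real.rpow_add hMpos]; norm_num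
  have h4 : M (2 * p) ≤ M p * (A ^ p * (M (2 * p)) ^ ((1:ℝ)/2)) :=
    h1.trans (mul_le_mul_of_nonneg_left h3 (le_of_lt (hpos p)))
  have h5 : (M (2 * p)) ^ ((1:ℝ)/2) ≤ M p * A ^ p := by
    have h4' : (M (2 * p)) ^ ((1:ℝ)/2) * (M (2 * p)) ^ ((1:ℝ)/2)
        ≤ (M p * A ^ p) * (M (2 * p)) ^ ((1:ℝ)/2) := by
      rw [hsq]; linarith [h4]
    exact le_of_mul_le_mul_right h4' hroot
  calc M (2 * p) = (M (2 * p)) ^ ((1:ℝ)/2) * (M (2 * p)) ^ ((1:ℝ)/2) := hsq.symm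
    _ ≤ (M p * A ^ p) * (M p * A ^ p) :=
        mul_le_mul h5 h5 (le_of_lt hroot) (le_of_lt (mul_pos (hpos p) (pow_pos hA0 p)))
    _ = A ^ (2 * p) * (M p) ^ 2 := by rw [two_mul, pow_add]; ring
end

section
/- Let M be normalized log-convex with M^{(c)}_p := (M_{cp})^{1/c} for c ∈ ℕ_{>0}. If M satisfies ∃ d ∈ ℕ_{>0}, ∃ A ≥ 1, ∀ p ≥ 1: μ_p ≤ A (M_{dp})^{1/(dp)}, then for all x, p ∈ ℕ_{>0}: μ^{(x)}_p ≤ A (M^{(dx)}_p)^{1/p}, where μ^{(x)}_p is the quotient of M^{(x)}. -/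
private lemma mu_mono (M : ℕ → ℝ) (hpos : ∀ p, 0 < M p)
    (hlc : ∀ p : ℕ, (M (p + 1)) ^ 2 ≤ M p * M (p + 2)) :
    ∀ {a b : ℕ}, a ≤ b → M (a + 1) / M a ≤ M (b + 1) / M b := by
  have step : ∀ p : ℕ, M (p + 1) / M p ≤ M (p + 2) / M (p + 1) := by
    intro p
    rw [div_le_div_iff₀ (hpos p) (hpos (p+1))]
    have := hlc p
    nlinarith [hpos p, hpos (p+1), hpos (p+2)]
  intro a b hab
  induction b with
  | zero => simp_all
  | succ n ih =>
    rcases Nat.lt_or_ge a (n+1) with hlt | hge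
    · exact (ih (Nat.lt_succ_iff.mp hlt)).trans (step n)
    · have : a = n + 1 := le_antisymm hab hge
      subst this; exact le_rfl

private lemma ratio_le (M : ℕ → ℝ) (hpos : ∀ p, 0 < M p)
    (hlc : ∀ p : ℕ, (M (p + 1)) ^ 2 ≤ M p * M (p + 2)) (n : ℕ) (hn : 1 ≤ n) :
    ∀ k : ℕ, k ≤ n → M n ≤ M (n - k) * (M n / M (n - 1)) ^ k := by
  intro k
  induction k with
  | zero => simp
  | succ k ih =>
    intro hk
    have hk' : k ≤ n := le_of_lt hk
    have h1 := ih hk'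
    have hsub : n - (k+1) + 1 = n - k := by omega
    have hmono : M (n - (k+1) + 1) / M (n - (k+1)) ≤ M n / M (n - 1) := by
      have h2 := mu_mono M hpos hlc (show n - (k+1) ≤ n - 1 by omega)
      rwa [show n - 1 + 1 = n by omega] at h2
    have hstep : M (n - k) ≤ M (n - (k+1)) * (M n / M (n - 1)) := by
      rw [← hsub]
      have hp := hpos (n - (k+1))
      calc M (n - (k+1) + 1)
          = M (n - (k+1)) * (M (n - (k+1) + 1) / M (n - (k+1))) := by
            field_simp
        _ ≤ M (n - (k+1)) * (M n / M (n - 1)) :=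
            mul_le_mul_of_nonneg_left hmono hp.le
    have hc : 0 ≤ M n / M (n - 1) := div_nonneg (hpos n).le (hpos (n-1)).le
    calc M n ≤ M (n - k) * (M n / M (n - 1)) ^ k := h1
      _ ≤ (M (n - (k+1)) * (M n / M (n - 1))) * (M n / M (n - 1)) ^ k :=
          mul_le_mul_of_nonneg_right hstep (pow_nonneg hc k)
      _ = M (n - (k+1)) * (M n / M (n - 1)) ^ (k+1) := by ring

/-- Let `M` be normalized log-convex with
`M^{(x)}_p := (M (x p))^(1/x)` for `x ∈ ℕ_{>0}`. If
`∃ d ≥ 1, ∃ A ≥ 1, ∀ p ≥ 1 : μ p ≤ A (M (d p))^(1/(d p))`, then for all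
`x, p ∈ ℕ_{>0}` one has `μ^{(x)}_p ≤ A (M^{(dx)}_p)^(1/p)`, where
`(M^{(dx)}_p)^(1/p) = (M (d x p))^(1/(d x p))`. -/
theorem stmt10 (M : ℕ → ℝ) (hpos : ∀ p, 0 < M p)
    (hM0 : M 0 = 1) (hM1 : 1 ≤ M 1)
    (hlc : ∀ p : ℕ, (M (p + 1)) ^ 2 ≤ M p * M (p + 2))
    (d : ℕ) (hd : 1 ≤ d) (A : ℝ) (hA : 1 ≤ A)
    (h : ∀ p : ℕ, 1 ≤ p →
      M p / M (p - 1) ≤ A * (M (d * p)) ^ (((d * p : ℕ) : ℝ)⁻¹)) :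
    ∀ x p : ℕ, 1 ≤ x → 1 ≤ p →
      (M (x * p)) ^ ((x : ℝ)⁻¹) / (M (x * (p - 1))) ^ ((x : ℝ)⁻¹) ≤
        A * (M (d * x * p)) ^ (((d * x * p : ℕ) : ℝ)⁻¹) := by
  intro x p hx hp
  set n := x * p with hn
  have hn1 : 1 ≤ n := Nat.one_le_iff_ne_zero.mpr (by positivity)
  have hxn : x ≤ n := Nat.le_mul_of_pos_right x hp
  have hsub : x * (p - 1) = n - x := by
    rw [hn, Nat.mul_sub, Nat.mul_one]
  set c := M n / M (n - 1) with hc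
  have hcpos : 0 < c := div_pos (hpos n) (hpos (n-1))
  have key : M n ≤ M (n - x) * c ^ x := ratio_le M hpos hlc n hn1 x hxn
  -- take x-th roots
  have hxR : (0:ℝ) < (x:ℝ) := by exact_mod_cast hx
  have hlhs : (M n) ^ ((x : ℝ)⁻¹) / (M (x * (p - 1))) ^ ((x : ℝ)⁻¹) ≤ c := by
    rw [hsub, ← Real.div_rpow (hpos n).le (hpos (n-x)).le]
    have hdiv : M n / M (n - x) ≤ c ^ x := by
      rw [div_le_iff₀ (hpos (n-x))]
      linarith [key]
    calc (M n / M (n - x)) ^ ((x : ℝ)⁻¹)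
        ≤ (c ^ x) ^ ((x : ℝ)⁻¹) := by
          apply Real.rpow_le_rpow (div_nonneg (hpos n).le (hpos (n-x)).le) hdiv (by positivity)
      _ = c := by
          rw [← Real.rpow_natCast c x, ← Real.rpow_mul hcpos.le,
            mul_inv_cancel₀ (ne_of_gt hxR), Real.rpow_one]
  have hfin : c ≤ A * (M (d * x * p)) ^ (((d * x * p : ℕ) : ℝ)⁻¹) := by
    have := h n hn1
    rw [← hc] at this
    have heq : d * n = d * x * p := by rw [hn]; ring
    rwa [heq] at this
  exact hlhs.trans hfin
end

section
/- The q-Gevrey-type sequences M_p := q^{p^2} with q > 1 satisfy the generalized moderate growth condition: there exists d ∈ ℕ_{>0} (e.g. d = 2) and A ≥ 1 with μ_p ≤ A (M_{dp})^{1/(dp)} for all p ≥ 1, but M does not have moderate growth. -/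
/-- The q-Gevrey sequences `M p = q^(p²)`, `q > 1`, satisfy the
generalized moderate growth condition (with some `d ≥ 1`, `A ≥ 1`) but do not
have moderate growth. -/
theorem stmt14 (q : ℝ) (hq : 1 < q) (M : ℕ → ℝ)
    (hM : ∀ p : ℕ, M p = q ^ (p ^ 2)) :
    (∃ d : ℕ, 1 ≤ d ∧ ∃ A : ℝ, 1 ≤ A ∧ ∀ p : ℕ, 1 ≤ p →
      M p / M (p - 1) ≤ A * (M (d * p)) ^ (((d * p : ℕ) : ℝ)⁻¹)) ∧
    ¬ (∃ C : ℝ, 1 ≤ C ∧ ∀ p r : ℕ, M (p + r) ≤ C ^ (p + r) * M p * M r) := by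
  have hq0 : (0:ℝ) < q := lt_trans zero_lt_one hq
  constructor
  · refine ⟨2, by norm_num, 1, le_refl 1, fun p hp => ?_⟩
    obtain ⟨k, rfl⟩ := Nat.exists_eq_add_of_le hp
    rw [hM, hM, hM, one_mul]
    have h1 : (q ^ ((2*(1+k))^2) : ℝ) ^ (((2*(1+k) : ℕ):ℝ))⁻¹
        = q ^ (2*(1+k) : ℕ) := by
      rw [← Real.rpow_natCast q ((2*(1+k))^2), ← Real.rpow_natCast q (2*(1+k)),
          ← Real.rpow_mul hq0.le]
      congr 1
      have hne : ((2*(1+k) : ℕ):ℝ) ≠ 0 := by positivity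
      push_cast at hne ⊢
      field_simp
    rw [h1]
    have hsub : (1 + k) - 1 = k := by omega
    rw [hsub, div_le_iff₀ (by positivity), ← pow_add]
    apply pow_le_pow_right₀ hq.le
    nlinarith [sq_nonneg k]
  · rintro ⟨C, hC, h⟩
    obtain ⟨n, hn⟩ := pow_unbounded_of_one_lt C hq
    set p := n + 1 with hp
    have hCp : C < q ^ p := lt_of_lt_of_le hn (pow_le_pow_right₀ hq.le (by omega))
    have hthis := h p p
    rw [hM, hM] at hthis
    have h2 : C ^ (p + p) < (q ^ p) ^ (p + p) :=
      pow_lt_pow_left₀ hCp (le_trans zero_le_one hC) (by omega)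
    have h3 : (q ^ p) ^ (p + p) * q ^ (p^2) * q ^ (p^2) = q ^ ((p+p)^2) := by
      rw [← pow_mul, ← pow_add, ← pow_add]
      ring_nf
    have h4 : C ^ (p + p) * q ^ (p^2) * q ^ (p^2) < q ^ ((p+p)^2) := by
      rw [← h3]
      have hq1 : (0:ℝ) < q ^ (p^2) := by positivity
      apply mul_lt_mul_of_pos_right _ hq1
      exact mul_lt_mul_of_pos_right h2 hq1
    exact absurd hthis (not_le.mpr h4)
end

section
/- The sequence M_0 := 1, M_p := exp(e^p) for p ≥ 1 satisfies μ_p ≤ (M_{2p})^{1/(2p)} for all p ≥ 1 (generalized moderate growth with d = 2 and A = 1), but violates derivation closedness: there is no D ≥ 1 with μ_{p+1} ≤ D^{p+1} for all p. -/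
lemma aux_sq (x : ℝ) (hx : 0 ≤ x) : (x/2+1)^2 ≤ Real.exp x := by
  have h := Real.add_one_le_exp (x/2)
  have h2 : Real.exp x = Real.exp (x/2) * Real.exp (x/2) := by
    rw [← Real.exp_add]; ring_nf
  nlinarith [Real.exp_pos (x/2)]

/-- The sequence `M 0 = 1`, `M p = exp(e^p)` for `p ≥ 1`
satisfies `μ p ≤ (M (2p))^(1/(2p))` for all `p ≥ 1` (generalized moderate
growth with `d = 2`, `A = 1`), but violates derivation closedness. -/
theorem stmt15 (M : ℕ → ℝ)
    (hM0 : M 0 = 1) (hM : ∀ p : ℕ, 1 ≤ p → M p = Real.exp (Real.exp p)) :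
    (∀ p : ℕ, 1 ≤ p →
      M p / M (p - 1) ≤ (M (2 * p)) ^ (((2 * p : ℕ) : ℝ)⁻¹)) ∧
    ¬ (∃ D : ℝ, 1 ≤ D ∧ ∀ p : ℕ, M (p + 1) ≤ D ^ (p + 1) * M p) := by
  constructor
  · intro p hp
    have hp2 : 1 ≤ 2 * p := by omega
    have hMp := hM p hp
    have hM2p := hM (2 * p) hp2
    have hMppos : (0:ℝ) < M p := by rw [hMp]; exact Real.exp_pos _
    have hden : (1:ℝ) ≤ M (p - 1) := by
      rcases Nat.eq_zero_or_pos (p - 1) with h | h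
      · rw [h, hM0]
      · rw [hM (p - 1) h]; exact Real.one_le_exp (Real.exp_pos _).le
    have hlhs : M p / M (p - 1) ≤ M p := by
      rw [div_le_iff₀ (by linarith)]
      nlinarith
    have hcast : ((2 * p : ℕ) : ℝ) = 2 * (p : ℝ) := by push_cast; ring
    have hrhs : (M (2 * p)) ^ (((2 * p : ℕ) : ℝ))⁻¹
        = Real.exp (Real.exp ((2 * p : ℕ) : ℝ) * (((2 * p : ℕ) : ℝ))⁻¹) := by
      rw [hM2p, ← Real.exp_mul]
    refine hlhs.trans ?_
    rw [hrhs, hMp, Real.exp_le_exp, hcast]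
    have hppos : (1:ℝ) ≤ (p : ℝ) := by exact_mod_cast hp
    have ht : (0:ℝ) < Real.exp p := Real.exp_pos _
    have hsq : Real.exp (2 * (p:ℝ)) = Real.exp p * Real.exp p := by
      rw [← Real.exp_add]; ring_nf
    have h2p : 2 * (p:ℝ) ≤ Real.exp p := by
      have := aux_sq (p:ℝ) (by linarith)
      nlinarith [sq_nonneg ((p:ℝ)/2 - 1)]
    rw [hsq]
    have hinv : (2*(p:ℝ)) * (2*(p:ℝ))⁻¹ = 1 := mul_inv_cancel₀ (by positivity)
    have hinvpos : (0:ℝ) < (2*(p:ℝ))⁻¹ := by positivity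
    nlinarith [mul_le_mul_of_nonneg_right (mul_le_mul_of_nonneg_left h2p ht.le) hinvpos.le]
  · rintro ⟨D, hD, hbound⟩
    set C := Real.log D with hC
    have hC0 : 0 ≤ C := Real.log_nonneg hD
    set n : ℕ := ⌈8 * C⌉₊ + 8 with hn
    have hnC : 8 * C ≤ (n : ℝ) := by
      have := Nat.le_ceil (8 * C)
      push_cast [hn]; linarith
    have hn8 : (8:ℝ) ≤ (n : ℝ) := by
      have : 8 ≤ n := by omega
      exact_mod_cast this
    have h1 := hbound n
    rw [hM n (by omega), hM (n+1) (by omega)] at h1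
    have hDpos : (0:ℝ) < D := by linarith
    have hlog : Real.exp ((n:ℝ)+1) ≤ ((n:ℝ)+1) * C + Real.exp (n:ℝ) := by
      have hle : Real.exp (Real.exp ((n:ℝ)+1)) ≤ Real.exp (((n:ℝ)+1) * C + Real.exp (n:ℝ)) := by
        have : D ^ (n+1) * Real.exp (Real.exp (n:ℝ)) = Real.exp (((n:ℝ)+1) * C + Real.exp (n:ℝ)) := by
          rw [Real.exp_add, ← Real.exp_log hDpos, ← Real.exp_nat_mul]
          push_cast
          ring_nf
          rw [← hC]; ring
        rw [← this]
        calc Real.exp (Real.exp ((n:ℝ)+1)) = Real.exp (Real.exp ((n+1:ℕ):ℝ)) := by push_cast; ring_nf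
          _ ≤ D ^ (n+1) * Real.exp (Real.exp (n:ℝ)) := h1
      exact (Real.exp_le_exp.mp hle)
    have he1 : (1:ℝ) ≤ Real.exp 1 - 1 := by
      have := Real.add_one_le_exp (1:ℝ); linarith
    have hdiff : Real.exp ((n:ℝ)+1) - Real.exp (n:ℝ) = Real.exp (n:ℝ) * (Real.exp 1 - 1) := by
      rw [Real.exp_add]; ring
    have hexn : Real.exp (n:ℝ) ≤ ((n:ℝ)+1) * C := by
      have hen : (0:ℝ) < Real.exp (n:ℝ) := Real.exp_pos _
      nlinarith
    have hbig : ((n:ℝ)/2+1)^2 ≤ Real.exp (n:ℝ) := aux_sq _ (by linarith)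
    nlinarith
end

section
/- If M and N are positive sequences with M_0 = N_0 = 1 that are equivalent (∃ C ≥ 1 with M_p ≤ C^p N_p and N_p ≤ C^p M_p for all p), and M satisfies ∃ d ∈ ℕ_{>0} ∃ A ≥ 1 ∀ p ≥ 1: μ_p ≤ A (M_{dp})^{1/(dp)}, then N satisfies ν_p ≤ A C^{2p} (N_{dp})^{1/(dp)} for all p ≥ 1 (with the same d). -/
/-- If `M ≈ N` (equivalent positive sequences with
`M 0 = N 0 = 1`) and `M` satisfies `μ p ≤ A (M (dp))^(1/(dp))` for all
`p ≥ 1`, then `N` satisfies `ν p ≤ A C^(2p) (N (dp))^(1/(dp))` for all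
`p ≥ 1`, with the same `d`. -/
theorem stmt16 (M N : ℕ → ℝ) (hMpos : ∀ p, 0 < M p) (hNpos : ∀ p, 0 < N p)
    (hM0 : M 0 = 1) (hN0 : N 0 = 1)
    (C : ℝ) (hC : 1 ≤ C)
    (hequiv : ∀ p : ℕ, M p ≤ C ^ p * N p ∧ N p ≤ C ^ p * M p)
    (d : ℕ) (hd : 1 ≤ d) (A : ℝ) (hA : 1 ≤ A)
    (h : ∀ p : ℕ, 1 ≤ p →
      M p / M (p - 1) ≤ A * (M (d * p)) ^ (((d * p : ℕ) : ℝ)⁻¹)) :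
    ∀ p : ℕ, 1 ≤ p →
      N p / N (p - 1) ≤ A * C ^ (2 * p) * (N (d * p)) ^ (((d * p : ℕ) : ℝ)⁻¹) := by
  intro p hp
  have hC0 : (0:ℝ) < C := lt_of_lt_of_le one_pos hC
  have hq : 1 ≤ d * p := le_trans (by norm_num) (Nat.mul_le_mul hd hp)
  have hqR : (0:ℝ) < ((d * p : ℕ) : ℝ) := by exact_mod_cast hq
  have h1 := (hequiv p).2
  have h2 := (hequiv (p - 1)).1
  have h3 := (hequiv (d * p)).1
  have hμ := h p hp
  have hrpow : (M (d * p)) ^ (((d * p : ℕ) : ℝ)⁻¹)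
      ≤ C * (N (d * p)) ^ (((d * p : ℕ) : ℝ)⁻¹) := by
    have hmono := Real.rpow_le_rpow (le_of_lt (hMpos _)) h3
      (le_of_lt (inv_pos.mpr hqR))
    calc (M (d * p)) ^ (((d * p : ℕ) : ℝ)⁻¹)
        ≤ (C ^ (d * p) * N (d * p)) ^ (((d * p : ℕ) : ℝ)⁻¹) := hmono
      _ = C * (N (d * p)) ^ (((d * p : ℕ) : ℝ)⁻¹) := by
          rw [Real.mul_rpow (by positivity) (le_of_lt (hNpos _)),
            ← Real.rpow_natCast C (d * p), ← Real.rpow_mul hC0.le,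
            mul_inv_cancel₀ (ne_of_gt hqR), Real.rpow_one]
  have hν : N p / N (p - 1) ≤ C ^ p * C ^ (p - 1) * (M p / M (p - 1)) := by
    have hstep : N p / N (p - 1) ≤ (C ^ p * M p) / (M (p - 1) / C ^ (p - 1)) := by
      apply div_le_div₀ (mul_nonneg (by positivity) (hMpos p).le) h1
        (div_pos (hMpos _) (by positivity))
      rw [div_le_iff₀ (by positivity)]
      calc M (p - 1) ≤ C ^ (p - 1) * N (p - 1) := h2
        _ = N (p - 1) * C ^ (p - 1) := mul_comm _ _
    calc N p / N (p - 1) ≤ (C ^ p * M p) / (M (p - 1) / C ^ (p - 1)) := hstep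
      _ = C ^ p * C ^ (p - 1) * (M p / M (p - 1)) := by field_simp
  have hMratio_pos : 0 ≤ M p / M (p - 1) := le_of_lt (div_pos (hMpos _) (hMpos _))
  have hCC : (0:ℝ) ≤ C ^ p * C ^ (p - 1) := by positivity
  calc N p / N (p - 1)
      ≤ C ^ p * C ^ (p - 1) * (M p / M (p - 1)) := hν
    _ ≤ C ^ p * C ^ (p - 1) * (A * (M (d * p)) ^ (((d * p : ℕ) : ℝ)⁻¹)) :=
        mul_le_mul_of_nonneg_left hμ hCC
    _ ≤ C ^ p * C ^ (p - 1) * (A * (C * (N (d * p)) ^ (((d * p : ℕ) : ℝ)⁻¹))) := by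
        apply mul_le_mul_of_nonneg_left _ hCC
        exact mul_le_mul_of_nonneg_left hrpow (le_trans zero_le_one hA)
    _ = A * (C ^ p * C ^ (p - 1) * C) * (N (d * p)) ^ (((d * p : ℕ) : ℝ)⁻¹) := by
        ring
    _ = A * C ^ (2 * p) * (N (d * p)) ^ (((d * p : ℕ) : ℝ)⁻¹) := by
        have hCp : C ^ p * C ^ (p - 1) * C = C ^ (2 * p) := by
          rw [mul_assoc, ← pow_succ, ← pow_add]
          congr 1
          omega
        rw [hCp]
end

section
/- There exists a sequence N ∈ 𝓛𝓒 (normalized, log-convex, (N_p)^{1/p} → ∞) which violates the generalized moderate growth condition: for every d ∈ ℕ_{>0} and every A ≥ 1 there exists p ≥ 1 with ν_p > A (N_{dp})^{1/(dp)}. -/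
open Filter Finset Real

/-- Breakpoints: `aa 1 = 0`, `aa (j+1) = j * (aa j + 1)`. -/
def aa : ℕ → ℕ
  | 0 => 0
  | 1 => 0
  | (n+2) => (n+1) * (aa (n+1) + 1)

/-- `(bF j).1 = b j` (slope on block `j`), `(bF j).2 = F j = f (aa j)`. -/
noncomputable def bF : ℕ → ℝ × ℝ
  | 0 => (0, 0)
  | 1 => (0, 0)
  | (j+2) =>
    (max ((bF (j+1)).1 + 1)
      ((((j+2 : ℕ) : ℝ)^2 * ((aa (j+2) : ℝ) + 1) +
        ((bF (j+1)).2 + (bF (j+1)).1 * ((aa (j+2) : ℝ) - (aa (j+1) : ℝ))))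
        / (aa (j+2) : ℝ)),
     (bF (j+1)).2 + (bF (j+1)).1 * ((aa (j+2) : ℝ) - (aa (j+1) : ℝ)))

noncomputable def bb (j : ℕ) : ℝ := (bF j).1
noncomputable def FF (j : ℕ) : ℝ := (bF j).2

/-- block index of `p ≥ 1`: the largest `j` with `aa j < p`. -/
def blk (p : ℕ) : ℕ := Nat.findGreatest (fun j => aa j < p) (p+1)

noncomputable def gg (p : ℕ) : ℝ := bb (blk p)

noncomputable def ff (p : ℕ) : ℝ := ∑ i ∈ Finset.range p, gg (i+1)

lemma aa_succ (j : ℕ) (hj : 1 ≤ j) : aa (j+1) = j * (aa j + 1) := by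
  obtain ⟨n, rfl⟩ := Nat.exists_eq_add_of_le' hj
  rfl

lemma aa_lt_succ (j : ℕ) (hj : 1 ≤ j) : aa j < aa (j+1) := by
  rw [aa_succ j hj]
  nlinarith [Nat.one_le_iff_ne_zero.1 hj]

lemma aa_mono : Monotone aa := by
  apply monotone_nat_of_le_succ
  intro n
  match n with
  | 0 => simp [aa]
  | (m+1) => exact (aa_lt_succ (m+1) (by omega)).le

lemma aa_ge (j : ℕ) : j ≤ aa j + 1 := by
  induction j with
  | zero => omega
  | succ n ih =>
    match n with
    | 0 => simp [aa]
    | (m+1) => have := aa_lt_succ (m+1) (by omega); omega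

lemma blk_spec {p : ℕ} (hp : 1 ≤ p) : aa (blk p) < p :=
  Nat.findGreatest_spec (P := fun j => aa j < p) (m := 1) (by omega)
    (by show aa 1 < p; simp [aa]; omega)

lemma blk_pos {p : ℕ} (hp : 1 ≤ p) : 1 ≤ blk p :=
  Nat.le_findGreatest (P := fun j => aa j < p) (by omega)
    (by show aa 1 < p; simp [aa]; omega)

lemma blk_le {p : ℕ} (hp : 1 ≤ p) : blk p ≤ p := by
  have h1 := blk_spec hp
  have h2 := aa_ge (blk p)
  omega

lemma blk_ub {p : ℕ} (hp : 1 ≤ p) : p ≤ aa (blk p + 1) := by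
  by_contra h
  push_neg at h
  exact Nat.findGreatest_is_greatest (P := fun j => aa j < p)
    (Nat.lt_succ_self _) (Nat.succ_le_succ (blk_le hp)) h

lemma blk_ge {p j : ℕ} (h : aa j < p) : j ≤ blk p := by
  have := aa_ge j
  exact Nat.le_findGreatest (P := fun j => aa j < p) (by omega) h

lemma blk_eq {p j : ℕ} (hj : 1 ≤ j) (h1 : aa j < p) (h2 : p ≤ aa (j+1)) :
    blk p = j := by
  have hle : j ≤ blk p := blk_ge h1
  rcases Nat.lt_or_ge j (blk p) with h | h
  · exfalso
    have : aa (j+1) ≤ aa (blk p) := aa_mono h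
    have := blk_spec (p := p) (by omega)
    omega
  · omega

lemma bb_one : bb 1 = 0 := rfl

lemma FF_one : FF 1 = 0 := rfl

lemma FF_succ (j : ℕ) (hj : 1 ≤ j) :
    FF (j+1) = FF j + bb j * ((aa (j+1) : ℝ) - (aa j : ℝ)) := by
  obtain ⟨n, rfl⟩ := Nat.exists_eq_add_of_le' hj
  rfl

lemma bb_succ_ge (j : ℕ) (hj : 1 ≤ j) : bb j + 1 ≤ bb (j+1) := by
  obtain ⟨n, rfl⟩ := Nat.exists_eq_add_of_le' hj
  exact le_max_left _ _

lemma bb_key (j : ℕ) (hj : 2 ≤ j) :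
    ((j : ℝ)^2 * ((aa j : ℝ) + 1) + FF j) / (aa j : ℝ) ≤ bb j := by
  obtain ⟨n, rfl⟩ := Nat.exists_eq_add_of_le' hj
  exact le_max_right _ _

lemma bb_ge (j : ℕ) (hj : 1 ≤ j) : (j : ℝ) - 1 ≤ bb j := by
  induction j with
  | zero => omega
  | succ n ih =>
    match n with
    | 0 => simp [bb_one]
    | (m+1) =>
      have h1 := bb_succ_ge (m+1) (by omega)
      have h2 := ih (by omega)
      push_cast at *
      linarith

lemma bb_nonneg (j : ℕ) (hj : 1 ≤ j) : 0 ≤ bb j := by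
  have h1 := bb_ge j hj
  have h2 : (1:ℝ) ≤ j := by exact_mod_cast hj
  linarith

lemma bb_mono {i j : ℕ} (hi : 1 ≤ i) (hij : i ≤ j) : bb i ≤ bb j := by
  induction j with
  | zero => omega
  | succ n ih =>
    rcases Nat.lt_or_ge i (n+1) with h | h
    · have h1 : 1 ≤ n := by omega
      have h2 := bb_succ_ge n h1
      have h3 := ih (by omega)
      linarith
    · have : i = n + 1 := by omega
      simp [this]

lemma FF_nonneg (j : ℕ) (hj : 1 ≤ j) : 0 ≤ FF j := by
  induction j with
  | zero => omega
  | succ n ih =>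
    match n with
    | 0 => simp [FF_one]
    | (m+1) =>
      rw [FF_succ (m+1) (by omega)]
      have h1 := ih (by omega)
      have h2 := bb_nonneg (m+1) (by omega)
      have h3 : (aa (m+1) : ℝ) ≤ (aa (m+2) : ℝ) := by
        exact_mod_cast aa_mono (by omega : m+1 ≤ m+2)
      nlinarith

lemma ff_succ (p : ℕ) : ff (p+1) = ff p + gg (p+1) := Finset.sum_range_succ _ _

lemma gg_eq {p j : ℕ} (hj : 1 ≤ j) (h1 : aa j < p) (h2 : p ≤ aa (j+1)) :
    gg p = bb j := by rw [gg, blk_eq hj h1 h2]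

lemma gg_nonneg (p : ℕ) (hp : 1 ≤ p) : 0 ≤ gg p :=
  bb_nonneg _ (blk_pos hp)

/-- On block `j`, `ff` is linear with slope `bb j`. -/
lemma ff_linear (j : ℕ) (hj : 1 ≤ j) :
    ∀ q, aa j ≤ q → q ≤ aa (j+1) →
      ff q = ff (aa j) + bb j * ((q : ℝ) - (aa j : ℝ)) := by
  intro q
  induction q with
  | zero =>
    intro h1 _
    have h0 : aa j = 0 := by omega
    rw [h0]; simp
  | succ n ih =>
    intro h1 h2
    rcases Nat.lt_or_ge (aa j) (n+1) with h | h
    · have hg : gg (n+1) = bb j := gg_eq hj h h2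
      rw [ff_succ, hg, ih (by omega) (by omega)]
      push_cast
      ring
    · have h0 : aa j = n + 1 := by omega
      rw [h0]; ring

lemma ff_aa (j : ℕ) (hj : 1 ≤ j) : ff (aa j) = FF j := by
  induction j with
  | zero => omega
  | succ n ih =>
    match n with
    | 0 => simp [aa, FF_one, ff]
    | (m+1) =>
      have h1 := ff_linear (m+1) (by omega) (aa (m+2)) (aa_mono (by omega)) le_rfl
      rw [h1, ih (by omega), FF_succ (m+1) (by omega)]

lemma ff_nonneg (p : ℕ) : 0 ≤ ff p :=
  Finset.sum_nonneg fun i _ => gg_nonneg _ (by omega)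

/-- lower bound used for the tendsto part -/
lemma gg_big {j p : ℕ} (hj : 1 ≤ j) (h : aa j < p) : (j:ℝ) - 1 ≤ gg p := by
  calc (j:ℝ) - 1 ≤ bb j := bb_ge j hj
  _ ≤ bb (blk p) := bb_mono hj (blk_ge h)
  _ = gg p := rfl

lemma ff_div_tendsto : Tendsto (fun p : ℕ => ff p / p) atTop atTop := by
  rw [tendsto_atTop]
  intro M
  set M' : ℝ := max M 1 with hM'
  have hM'pos : 0 < M' := lt_of_lt_of_le one_pos (le_max_right _ _)
  obtain ⟨j, hj⟩ : ∃ j : ℕ, 1 ≤ j ∧ 2 * M' + 1 ≤ (j:ℝ) - 1 := by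
    obtain ⟨j, hjj⟩ := exists_nat_ge (2 * M' + 2)
    exact ⟨max j 1, le_max_right _ _, by
      have : (j:ℝ) ≤ (max j 1 : ℕ) := by exact_mod_cast le_max_left j 1
      linarith⟩
  set K := aa j + 1 with hK
  filter_upwards [eventually_ge_atTop (2 * K)] with p hp
  have hp1 : 1 ≤ p := by omega
  have hsum : ((p - (K-1) : ℕ) : ℝ) * (2 * M') ≤ ff p := by
    have hsub : Finset.Ico (K-1) p ⊆ Finset.range p := by
      intro x hx; simp at hx ⊢; omega
    have h1 : ∑ i ∈ Finset.Ico (K-1) p, gg (i+1) ≤ ff p := by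
      apply Finset.sum_le_sum_of_subset_of_nonneg hsub
      intro i _ _; exact gg_nonneg _ (by omega)
    have h2 : ∀ i ∈ Finset.Ico (K-1) p, 2 * M' ≤ gg (i+1) := by
      intro i hi
      simp at hi
      have hlt : aa j < i + 1 := by omega
      have := gg_big hj.1 hlt
      linarith [hj.2]
    calc ((p - (K-1) : ℕ) : ℝ) * (2 * M')
        = (Finset.Ico (K-1) p).card • (2 * M') := by
          rw [Nat.card_Ico, nsmul_eq_mul]
      _ ≤ ∑ i ∈ Finset.Ico (K-1) p, gg (i+1) :=
          Finset.card_nsmul_le_sum _ _ _ h2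
      _ ≤ ff p := h1
  have hc : ((p - (K-1) : ℕ) : ℝ) = (p:ℝ) - (K:ℝ) + 1 := by
    rw [Nat.cast_sub (by omega : K - 1 ≤ p), Nat.cast_sub (by omega : 1 ≤ K)]
    push_cast; ring
  rw [hc] at hsum
  have hppos : (0:ℝ) < p := by exact_mod_cast (by omega : 0 < p)
  have hKp : (2 * K : ℝ) ≤ p := by exact_mod_cast hp
  have hMp : M' * p ≤ ff p := by nlinarith
  calc M ≤ M' := le_max_left _ _
    _ = M' * p / p := by field_simp
    _ ≤ ff p / p := by gcongr

/-- There exists `N ∈ 𝓛𝓒` (normalized, log-convex,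
`(N p)^(1/p) → ∞`) which violates the generalized moderate growth condition:
for every `d ≥ 1` and `A ≥ 1` there is `p ≥ 1` with
`ν p > A (N (dp))^(1/(dp))`. -/
theorem stmt18 :
    ∃ N : ℕ → ℝ, (∀ p, 0 < N p) ∧ N 0 = 1 ∧ 1 ≤ N 1 ∧
      (∀ p : ℕ, (N (p + 1)) ^ 2 ≤ N p * N (p + 2)) ∧
      Filter.Tendsto (fun p : ℕ => (N p) ^ ((p : ℝ)⁻¹)) Filter.atTop
        Filter.atTop ∧
      (∀ d : ℕ, 1 ≤ d → ∀ A : ℝ, 1 ≤ A → ∃ p : ℕ, 1 ≤ p ∧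
        A * (N (d * p)) ^ (((d * p : ℕ) : ℝ)⁻¹) < N p / N (p - 1)) := by
  refine ⟨fun p => Real.exp (ff p), fun p => Real.exp_pos _, ?_, ?_, ?_, ?_, ?_⟩
  · simp [ff]
  · exact Real.one_le_exp (ff_nonneg 1)
  · intro p
    rw [sq, ← Real.exp_add, ← Real.exp_add]
    apply Real.exp_le_exp.2
    have h1 := ff_succ p
    have h2 := ff_succ (p+1)
    have h3 : gg (p+1) ≤ gg (p+2) := by
      have h4 : aa (blk (p+1)) < p + 2 := by
        have := blk_spec (p := p+1) (by omega); omega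
      exact bb_mono (blk_pos (by omega)) (blk_ge h4)
    linarith
  · have h := Real.tendsto_exp_atTop.comp ff_div_tendsto
    refine h.congr fun p => ?_
    simp only [Function.comp_apply]
    rw [Real.rpow_def_of_pos (Real.exp_pos _), Real.log_exp, ← div_eq_mul_inv]
  · intro d hd A hA
    set j : ℕ := max 2 (max d (⌈Real.log A⌉₊ + 1)) with hj
    have hj2 : 2 ≤ j := le_max_left _ _
    have hjd : d ≤ j := le_trans (le_max_left _ _) (le_max_right _ _)
    have hjA : Real.log A < j := by
      have h1 : Real.log A ≤ ⌈Real.log A⌉₊ := Nat.le_ceil _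
      have h2 : (⌈Real.log A⌉₊ : ℝ) + 1 ≤ (j : ℝ) := by
        exact_mod_cast le_trans (le_max_right _ _) (le_max_right 2 _)
      linarith
    set p : ℕ := aa j + 1 with hp
    refine ⟨p, by omega, ?_⟩
    have haa1 : 1 ≤ aa j := by
      calc 1 = aa 2 := rfl
        _ ≤ aa j := aa_mono hj2
    have haj : aa (j+1) = j * (aa j + 1) := aa_succ j (by omega)
    have hpj : p ≤ aa (j+1) := by rw [haj]; nlinarith
    have hpdp : p ≤ d * p := Nat.le_mul_of_pos_left p (by omega)
    have hdpj : d * p ≤ aa (j+1) := by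
      rw [haj]
      exact Nat.mul_le_mul_right _ hjd
    -- values of ff
    have hffp : ff p = ff (aa j) + gg p := ff_succ (aa j)
    have hggp : gg p = bb j := gg_eq (by omega) (by omega) hpj
    have hffdp : ff (d*p) = FF j + bb j * (((d*p : ℕ) : ℝ) - (aa j : ℝ)) := by
      rw [ff_linear j (by omega) (d*p) (by omega) hdpj, ff_aa j (by omega)]
    have hp1 : p - 1 = aa j := by omega
    -- real abbreviations
    set a : ℝ := (aa j : ℝ) with ha
    set D : ℝ := ((d * p : ℕ) : ℝ) with hD
    have ha1 : (1:ℝ) ≤ a := by rw [ha]; exact_mod_cast haa1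
    have hDa : a + 1 ≤ D := by
      rw [hD, ha]
      exact_mod_cast hpdp
    have hDj : D ≤ (j:ℝ) * (a + 1) := by
      have : (d * p : ℕ) ≤ j * (aa j + 1) := by rw [← haj]; exact hdpj
      rw [hD, ha]
      exact_mod_cast this
    have hD0 : (0:ℝ) < D := by linarith
    have hbkey : (j:ℝ)^2 * (a + 1) + FF j ≤ bb j * a := by
      have := bb_key j hj2
      rw [div_le_iff₀ (by linarith : (0:ℝ) < a)] at this
      linarith
    have hFF := FF_nonneg j (by omega)
    -- the key inequality:  log A + ff(dp)/D < bb j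
    have hkey : Real.log A + ff (d*p) / D < bb j := by
      rw [hffdp]
      have h1 : (j:ℝ) * D ≤ (j:ℝ)^2 * (a+1) := by nlinarith [hj2]
      have hAj : Real.log A * D < (j:ℝ) * D := by nlinarith
      have h2 : (FF j + bb j * (D - a)) / D < bb j - Real.log A := by
        rw [div_lt_iff₀ hD0]
        nlinarith
      linarith
    -- conclude
    rw [hp1]
    show A * Real.exp (ff (d*p)) ^ D⁻¹ < Real.exp (ff p) / Real.exp (ff (aa j))
    rw [← Real.exp_sub, hffp, hggp]
    have hlhs : A * Real.exp (ff (d*p)) ^ (D⁻¹)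
        = Real.exp (Real.log A + ff (d*p) / D) := by
      rw [Real.rpow_def_of_pos (Real.exp_pos _), Real.log_exp,
        ← div_eq_mul_inv, Real.exp_add, Real.exp_log (by linarith : (0:ℝ) < A)]
    rw [hlhs]
    have heq : ff (aa j) + bb j - ff (aa j) = bb j := by ring
    rw [heq]
    exact Real.exp_lt_exp.2 hkey
end

section
/- Let M be normalized log-convex with quotients μ and, for x, c ∈ ℕ_{>0}, let μ^{(x)} denote the quotients of M^{(x)}_p := (M_{xp})^{1/x}. Suppose there exists Q ∈ ℕ_{>0} and β ≥ 0 with liminf_{p→∞} μ^{(x)}_{Qp}/μ^{(x)}_p > Q^β. Then liminf_{p→∞} μ^{(cx)}_{Qp}/μ^{(cx)}_p > Q^β for all c ∈ ℕ_{>0}, with the same Q. -/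
open Filter Finset

private lemma stmt19_mulsub (x m : ℕ) (hm : 1 ≤ m) : x * (m - 1) + x = x * m := by
  obtain ⟨m', rfl⟩ := Nat.exists_eq_add_of_le hm
  rw [Nat.add_sub_cancel_left]
  ring

private lemma stmt19_natkey (Q c p i : ℕ) (hQ : 1 ≤ Q) (hp : 1 ≤ p) (hi : i < c) :
    Q * (c * (p - 1) + i + 1) ≤ c * (Q * p - 1) + i + 1 := by
  obtain ⟨Q', rfl⟩ := Nat.exists_eq_add_of_le hQ
  obtain ⟨p', rfl⟩ := Nat.exists_eq_add_of_le hp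
  obtain ⟨d, rfl⟩ := Nat.exists_eq_add_of_lt hi
  have e1 : 1 + p' - 1 = p' := by omega
  have e2 : (1 + Q') * (1 + p') - 1 = p' + Q' + Q' * p' := by
    have h : (1 + Q') * (1 + p') = 1 + (p' + Q' + Q' * p') := by ring
    rw [h, Nat.add_sub_cancel_left]
  rw [e1, e2]
  nlinarith [Nat.zero_le (Q' * d)]

private lemma stmt19_mono (G : ℕ → ℝ) (h : ∀ p, 2 * G (p + 1) ≤ G p + G (p + 2)) :
    ∀ a b d : ℕ, a ≤ b → G (a + d) - G a ≤ G (b + d) - G b := by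
  have hD : Monotone (fun p => G (p + 1) - G p) :=
    monotone_nat_of_le_succ fun p => by
      have := h p
      show G (p + 1) - G p ≤ G (p + 2) - G (p + 1)
      linarith
  intro a b d hab
  induction d with
  | zero => simp
  | succ d ih =>
    have h2 := hD (show a + d ≤ b + d by omega)
    simp only at h2
    have e1 : a + (d + 1) = (a + d) + 1 := rfl
    have e2 : b + (d + 1) = (b + d) + 1 := rfl
    rw [e1, e2]
    linarith

private lemma stmt19_tel (G : ℕ → ℝ) (x c m : ℕ) (hm : 1 ≤ m) :
    G (c * x * m) - G (c * x * (m - 1)) =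
      ∑ i ∈ Finset.range c, (G (x * (c * (m - 1) + i + 1)) - G (x * (c * (m - 1) + i))) := by
  obtain ⟨m', rfl⟩ := Nat.exists_eq_add_of_le hm
  rw [Nat.add_sub_cancel_left]
  have h := Finset.sum_range_sub (fun i => G (x * (c * m' + i))) c
  have e1 : c * x * (1 + m') = x * (c * m' + c) := by ring
  have e2 : c * x * m' = x * (c * m' + 0) := by ring
  rw [e1, e2, ← h]
  apply Finset.sum_congr rfl
  intro i _
  have e3 : c * m' + (i + 1) = c * m' + i + 1 := by ring
  rw [e3]

private lemma stmt19_key (G : ℕ → ℝ)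
    (hmono : ∀ a b d : ℕ, a ≤ b → G (a + d) - G a ≤ G (b + d) - G b)
    (x Q c : ℕ) (hx : 1 ≤ x) (hQ : 1 ≤ Q) (hc : 1 ≤ c)
    (ell : ℝ) (N : ℕ)
    (hN : ∀ q : ℕ, N + 1 ≤ q →
      (x : ℝ) * ell ≤ (G (x * (Q * q)) - G (x * (Q * q - 1))) - (G (x * q) - G (x * (q - 1))))
    (p : ℕ) (hp : N + 1 ≤ p) :
    ((c * x : ℕ) : ℝ) * ell ≤
      (G (c * x * (Q * p)) - G (c * x * (Q * p - 1))) -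
        (G (c * x * p) - G (c * x * (p - 1))) := by
  have hp1 : 1 ≤ p := by omega
  have hQp1 : 1 ≤ Q * p := Nat.mul_pos (by omega) (by omega)
  rw [stmt19_tel G x c p hp1, stmt19_tel G x c (Q * p) hQp1, ← Finset.sum_sub_distrib]
  have hconst : ((c * x : ℕ) : ℝ) * ell = ∑ _i ∈ Finset.range c, (x : ℝ) * ell := by
    rw [Finset.sum_const, Finset.card_range, nsmul_eq_mul]
    push_cast; ring
  rw [hconst]
  apply Finset.sum_le_sum
  intro i hi
  rw [Finset.mem_range] at hi
  set qv := c * (p - 1) + i + 1 with hqv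
  have hqN : N + 1 ≤ qv := by
    have h1 : p - 1 ≤ c * (p - 1) := Nat.le_mul_of_pos_left _ (by omega)
    rw [hqv]
    obtain ⟨A, hA⟩ : ∃ A, c * (p - 1) = A := ⟨_, rfl⟩
    rw [hA] at h1 ⊢
    omega
  have hstep := hN qv hqN
  have hq1 : qv - 1 = c * (p - 1) + i := by omega
  rw [hq1] at hstep
  have hQqv1 : 1 ≤ Q * qv := Nat.mul_pos (by omega) (by omega)
  -- monotonicity step
  have hle : x * (Q * qv - 1) ≤ x * (c * (Q * p - 1) + i) := by
    apply Nat.mul_le_mul_left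
    have hnk := stmt19_natkey Q c p i hQ hp1 hi
    rw [← hqv] at hnk
    obtain ⟨A, hA⟩ : ∃ A, Q * qv = A := ⟨_, rfl⟩
    obtain ⟨B, hB⟩ : ∃ B, c * (Q * p - 1) = B := ⟨_, rfl⟩
    rw [hA, hB] at hnk ⊢
    omega
  have hmm := hmono (x * (Q * qv - 1)) (x * (c * (Q * p - 1) + i)) x hle
  rw [stmt19_mulsub x (Q * qv) hQqv1] at hmm
  have e : x * (c * (Q * p - 1) + i) + x = x * (c * (Q * p - 1) + i + 1) := by ring
  rw [e] at hmm
  linarith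

/-- Let `M` be normalized log-convex and, for `x ∈ ℕ_{>0}`,
let `μ^{(x)}` denote the quotients of `M^{(x)}_p := (M (x p))^(1/x)`. If for
some `Q ∈ ℕ_{>0}` and `β ≥ 0` one has
`liminf_{p→∞} μ^{(x)} (Qp) / μ^{(x)} p > Q^β`, then for every `c ∈ ℕ_{>0}`,
`liminf_{p→∞} μ^{(cx)} (Qp) / μ^{(cx)} p > Q^β` with the same `Q`. -/
theorem stmt19 (M : ℕ → ℝ) (hpos : ∀ p, 0 < M p)
    (hM0 : M 0 = 1) (hM1 : 1 ≤ M 1)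
    (hlc : ∀ p : ℕ, (M (p + 1)) ^ 2 ≤ M p * M (p + 2))
    (μ' : ℕ → ℕ → ℝ)
    (hμ' : ∀ x p : ℕ, μ' x p =
      (M (x * p)) ^ ((x : ℝ)⁻¹) / (M (x * (p - 1))) ^ ((x : ℝ)⁻¹))
    (x : ℕ) (hx : 1 ≤ x) (Q : ℕ) (hQ : 1 ≤ Q) (β : ℝ) (hβ : 0 ≤ β)
    (h : (((Q : ℝ) ^ β : ℝ) : EReal) <
      Filter.liminf (fun p : ℕ => ((μ' x (Q * p) / μ' x p : ℝ) : EReal))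
        Filter.atTop) :
    ∀ c : ℕ, 1 ≤ c →
      (((Q : ℝ) ^ β : ℝ) : EReal) <
        Filter.liminf
          (fun p : ℕ => ((μ' (c * x) (Q * p) / μ' (c * x) p : ℝ) : EReal))
          Filter.atTop := by
  intro c hc
  set G : ℕ → ℝ := fun p => Real.log (M p) with hG
  have hGstep : ∀ p, 2 * G (p + 1) ≤ G p + G (p + 2) := by
    intro p
    have h1 := Real.log_le_log (pow_pos (hpos _) 2) (hlc p)
    rw [Real.log_pow, Real.log_mul (ne_of_gt (hpos p)) (ne_of_gt (hpos (p + 2)))] at h1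
    push_cast at h1
    simp only [hG]
    linarith
  have hmono := stmt19_mono G hGstep
  have hμexp : ∀ y q : ℕ, 1 ≤ y →
      μ' y q = Real.exp ((G (y * q) - G (y * (q - 1))) / (y : ℝ)) := by
    intro y q hy
    have hy' : (0 : ℝ) < (y : ℝ) := by exact_mod_cast hy
    rw [hμ' y q, Real.rpow_def_of_pos (hpos _), Real.rpow_def_of_pos (hpos _),
      ← Real.exp_sub]
    congr 1
    simp only [hG]
    field_simp
  -- extract L
  obtain ⟨L, hL1, hL2⟩ := EReal.exists_between_coe_real h
  have hLβ : (Q : ℝ) ^ β < L := by exact_mod_cast hL1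
  have hQβpos : (0 : ℝ) < (Q : ℝ) ^ β := by
    apply Real.rpow_pos_of_pos
    exact_mod_cast Nat.lt_of_lt_of_le Nat.zero_lt_one hQ
  have hLpos : (0 : ℝ) < L := lt_trans hQβpos hLβ
  have hev := Filter.eventually_lt_of_lt_liminf hL2
  obtain ⟨N, hN0⟩ := Filter.eventually_atTop.1 hev
  have hxpos : (0 : ℝ) < (x : ℝ) := by exact_mod_cast hx
  have hN : ∀ q : ℕ, N + 1 ≤ q →
      (x : ℝ) * Real.log L ≤
        (G (x * (Q * q)) - G (x * (Q * q - 1))) - (G (x * q) - G (x * (q - 1))) := by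
    intro q hq
    have h1 : (L : ℝ) < μ' x (Q * q) / μ' x q := by
      have := hN0 q (by omega)
      exact_mod_cast this
    rw [hμexp x (Q * q) hx, hμexp x q hx, ← Real.exp_sub] at h1
    have h2 := Real.log_lt_log hLpos h1
    rw [Real.log_exp, div_sub_div_same] at h2
    have h3 := (le_div_iff₀ hxpos).1 (le_of_lt h2)
    linarith
  -- conclusion
  have hcx : 1 ≤ c * x := Nat.mul_pos (by omega) (by omega)
  have hcxpos : (0 : ℝ) < ((c * x : ℕ) : ℝ) := by exact_mod_cast hcx
  have hev2 : ∀ᶠ p : ℕ in Filter.atTop,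
      (L : EReal) ≤ ((μ' (c * x) (Q * p) / μ' (c * x) p : ℝ) : EReal) := by
    rw [Filter.eventually_atTop]
    refine ⟨N + 1, fun p hp => ?_⟩
    rw [EReal.coe_le_coe_iff]
    have hkey := stmt19_key G hmono x Q c hx hQ hc (Real.log L) N hN p hp
    rw [hμexp (c * x) (Q * p) hcx, hμexp (c * x) p hcx, ← Real.exp_sub]
    conv_lhs => rw [← Real.exp_log hLpos]
    apply Real.exp_le_exp.2
    rw [div_sub_div_same]
    rw [le_div_iff₀ hcxpos]
    linarith
  calc (((Q : ℝ) ^ β : ℝ) : EReal) < (L : EReal) := by exact_mod_cast hLβ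
    _ ≤ _ := Filter.le_liminf_of_le (by isBoundedDefault) hev2
end
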